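/- For any probability density function h on the reals with finite Fisher-type integral ∫ (h'(s)/h(s))^4 h(s) ds < ∞, the density h is bounded: there exists a constant C such that h(x) ≤ C for all x. More precisely, ‖h‖_∞ ≤ C(1 + ∫ (h'(s)/h(s))^4 h(s) ds) for a universal constant C. -/

import Mathlib

/-!
Writing `h' = t h` with `t = h'/h`, Young's inequality `|t| ≤ t⁴/4 + 3/4` gives
`|h'| ≤ (h'/h)⁴ h / 4 + 3 h / 4` pointwise, so `h'` is integrable with `∫ |h'| ≤ I/4 + 3/4`,
where `I = ∫ (h'/h)⁴ h`. Since `h` is integrable it vanishes at `-∞`, and then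
`h x = ∫_{-∞}^x h' ≤ ∫ |h'|`. Hence `‖h‖_∞ ≤ 1 + I`.
-/

open MeasureTheory

theorem abs_le_pow_four_div_four_add (t : ℝ) : |t| ≤ t ^ 4 / 4 + 3 / 4 := by
  rcases abs_cases t with ⟨ht, _⟩ | ⟨ht, _⟩ <;>
    nlinarith [sq_nonneg (t - 1), sq_nonneg (t + 1), sq_nonneg (t ^ 2 - 1)]

theorem abs_deriv_le_of_nonneg {h : ℝ → ℝ} (hpos : ∀ y, 0 ≤ h y) (s : ℝ) :
    |deriv h s| ≤ (deriv h s / h s) ^ 4 * h s / 4 + 3 / 4 * h s := by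
  rcases (hpos s).eq_or_lt with hzero | hs
  · -- a zero of a nonnegative function is a minimum
    have hmin : IsLocalMin h s := Filter.Eventually.of_forall fun y => hzero ▸ hpos y
    simp [hmin.deriv_eq_zero, ← hzero]
  · calc |deriv h s| = |deriv h s / h s| * h s := by
          rw [abs_div, abs_of_pos hs, div_mul_cancel₀ _ hs.ne']
      _ ≤ ((deriv h s / h s) ^ 4 / 4 + 3 / 4) * h s :=
          mul_le_mul_of_nonneg_right (abs_le_pow_four_div_four_add _) hs.le
      _ = (deriv h s / h s) ^ 4 * h s / 4 + 3 / 4 * h s := by ring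

theorem norm_le_integral_norm_deriv {E : Type*} [NormedAddCommGroup E] [NormedSpace ℝ E]
    [CompleteSpace E] {f : ℝ → E} (hf : Differentiable ℝ f) (hfi : Integrable f)
    (hf'i : Integrable (deriv f)) (x : ℝ) : ‖f x‖ ≤ ∫ s, ‖deriv f s‖ := by
  have hderiv : ∀ s ∈ Set.Iic x, HasDerivAt f (deriv f s) s := fun s _ => (hf s).hasDerivAt
  have hlim : Filter.Tendsto f Filter.atBot (nhds 0) :=
    tendsto_zero_of_hasDerivAt_of_integrableOn_Iic hderiv hf'i.integrableOn hfi.integrableOn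
  have hftc : ∫ s in Set.Iic x, deriv f s = f x := by
    rw [integral_Iic_of_hasDerivAt_of_tendsto' hderiv hf'i.integrableOn hlim, sub_zero]
  calc ‖f x‖ = ‖∫ s in Set.Iic x, deriv f s‖ := by rw [hftc]
    _ ≤ ∫ s in Set.Iic x, ‖deriv f s‖ := norm_integral_le_integral_norm _
    _ ≤ ∫ s, ‖deriv f s‖ :=
        setIntegral_le_integral hf'i.norm (Filter.Eventually.of_forall fun _ => norm_nonneg _)

/-- A probability density `h` with finite Fisher-type integral `∫ (h'/h)⁴ h < ∞` is bounded:
`‖h‖_∞ ≤ C (1 + ∫ (h'/h)⁴ h)` for a universal constant `C`. -/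
theorem stmt0 :
    ∃ C : ℝ, 0 < C ∧
      ∀ h : ℝ → ℝ, (∀ x, 0 ≤ h x) → ContDiff ℝ 1 h → (∫ x, h x = 1) →
        Integrable (fun s => (deriv h s / h s) ^ 4 * h s) →
        ∀ x, h x ≤ C * (1 + ∫ s, (deriv h s / h s) ^ 4 * h s) := by
  refine ⟨1, one_pos, fun h hpos hC1 hint hfisher x => ?_⟩
  have hh : Integrable h := Integrable.of_integral_ne_zero (by simp [hint])
  have hbound : Integrable fun s => (deriv h s / h s) ^ 4 * h s / 4 + 3 / 4 * h s :=
    (hfisher.div_const _).add (hh.const_mul _)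
  have hh' : Integrable (deriv h) :=
    hbound.mono' (measurable_deriv h).aestronglyMeasurable
      (Filter.Eventually.of_forall (abs_deriv_le_of_nonneg hpos))
  have hI : 0 ≤ ∫ s, (deriv h s / h s) ^ 4 * h s :=
    integral_nonneg fun s => mul_nonneg (by positivity) (hpos s)
  calc h x ≤ ‖h x‖ := le_abs_self _
    _ ≤ ∫ s, ‖deriv h s‖ :=
        norm_le_integral_norm_deriv (hC1.differentiable one_ne_zero) hh hh' x
    _ ≤ ∫ s, ((deriv h s / h s) ^ 4 * h s / 4 + 3 / 4 * h s) :=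
        integral_mono hh'.norm hbound (abs_deriv_le_of_nonneg hpos)
    _ = (∫ s, (deriv h s / h s) ^ 4 * h s) / 4 + 3 / 4 := by
        rw [integral_add (hfisher.div_const _) (hh.const_mul _), integral_div,
          integral_const_mul, hint, mul_one]
    _ ≤ 1 * (1 + ∫ s, (deriv h s / h s) ^ 4 * h s) := by linarith
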